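/- Let M = (S, ρ) be a matroid scheme. Then its poset of flats F(M), with the rank function inherited from ρ, is a geometric poset: it is bounded below and ranked, every maximal interval of F(M) is a geometric lattice, and for every flat x, every set A of atoms of F(M), and every y that is a minimal upper bound of A in F(M) with ρ(x) < ρ(y) = |A|, there exists a ∈ A with a ≰ x and a and x having a common upper bound in F(M). -/

import Mathlib

/-- The set of minimal upper bounds of `x` and `y` (denoted `x ∨ y` in the paper). -/
def mub {S : Type*} [PartialOrder S] (x y : S) : Set S :=
  {u | x ≤ u ∧ y ≤ u ∧ ∀ v, x ≤ v → y ≤ v → v ≤ u → v = u}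

/-- The set of maximal lower bounds of `x` and `y` (denoted `x ∧ y` in the paper). -/
def mlb {S : Type*} [PartialOrder S] (x y : S) : Set S :=
  {l | l ≤ x ∧ l ≤ y ∧ ∀ m, m ≤ x → m ≤ y → l ≤ m → m = l}

/-- The set of minimal upper bounds of a subset `T`. -/
def mubSet {S : Type*} [PartialOrder S] (T : Set S) : Set S :=
  {u | (∀ t ∈ T, t ≤ u) ∧ ∀ v, (∀ t ∈ T, t ≤ v) → v ≤ u → v = u}

/-- The number of atoms below `x`, i.e. `|x|`, the rank of `x` in a simplicial poset. -/
noncomputable def natRank {S : Type*} [PartialOrder S] [OrderBot S] (x : S) : ℕ :=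
  Nat.card {a : S // IsAtom a ∧ a ≤ x}

/-- A finite bounded-below poset is simplicial if every lower interval is isomorphic to
the Boolean lattice of subsets of the set of atoms below. -/
def IsSimplicialPoset (S : Type*) [PartialOrder S] [OrderBot S] [Fintype S] : Prop :=
  ∀ x : S, Nonempty (Set.Iic x ≃o Set {a : S // IsAtom a ∧ a ≤ x})

/-- A matroid scheme: a rank function `ρ` on a finite simplicial poset `S`
satisfying (M1)–(M5). -/
structure IsMatroidScheme {S : Type*} [PartialOrder S] [OrderBot S] [Fintype S]
    (ρ : S → ℕ) : Prop where
  simplicial : IsSimplicialPoset S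
  M1 : ∀ x : S, ρ x ≤ natRank x
  M2 : ∀ ⦃x y : S⦄, x ≤ y → ρ x ≤ ρ y
  M3 : ∀ x y u l : S, u ∈ mub x y → l ∈ mlb x y → ρ u + ρ l ≤ ρ x + ρ y
  M4 : ∀ x y l : S, l ∈ mlb x y → ρ x = ρ l → (mub x y).Nonempty
  M5 : ∀ x y : S, ρ x < ρ y →
    ∃ a : S, IsAtom a ∧ a ≤ y ∧ ¬ a ≤ x ∧ (mub x a).Nonempty

/-- `cl` is the closure operator of a matroid scheme `(S, ρ)`:
`cl x` is the greatest element above `x` of the same rank. -/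
def IsClosureFun {S : Type*} [PartialOrder S] (ρ : S → ℕ) (cl : S → S) : Prop :=
  ∀ x : S, x ≤ cl x ∧ ρ (cl x) = ρ x ∧ ∀ y : S, x ≤ y → ρ y = ρ x → y ≤ cl x

/-- The bases of a matroid scheme: the maximal independent elements. -/
def Bases {S : Type*} [PartialOrder S] [OrderBot S] (ρ : S → ℕ) : Set S :=
  {x | ρ x = natRank x ∧ ∀ w, ρ w = natRank w → x ≤ w → w = x}

/-- The circuits of a matroid scheme: the minimal dependent elements. -/
def Circuits {S : Type*} [PartialOrder S] [OrderBot S] (ρ : S → ℕ) : Set S :=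
  {x | ρ x < natRank x ∧ ∀ y, ρ y < natRank y → y ≤ x → y = x}

/-- `c` is the complement `x ∖ a` of `a` in the Boolean lattice `S_{≤ x}`. -/
def IsComplementIn {S : Type*} [PartialOrder S] [OrderBot S] (c a x : S) : Prop :=
  c ≤ x ∧ a ≤ x ∧ (∀ l : S, l ≤ c → l ≤ a → l = ⊥) ∧
    (∀ u : S, u ≤ x → c ≤ u → a ≤ u → u = x)

/-- The rank of a matroid scheme: the common value of `ρ` on maximal elements
(equal to the maximum value of `ρ`). -/
noncomputable def schemeRank {S : Type*} [Fintype S] (ρ : S → ℕ) : ℕ :=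
  sSup (Set.range ρ)

/-- The Tutte polynomial of a matroid scheme, as a two-variable integer function. -/
noncomputable def tutte {S : Type*} [PartialOrder S] [OrderBot S] [Fintype S]
    (ρ : S → ℕ) (x y : ℤ) : ℤ :=
  ∑ w : S, (x - 1) ^ (schemeRank ρ - ρ w) * (y - 1) ^ (natRank w - ρ w)

/-- An element of a poset is an order-atom if it covers a global minimum. -/
def OrdAtom {P : Type*} [PartialOrder P] (a : P) : Prop :=
  ∃ b : P, (∀ z : P, b ≤ z) ∧ b ⋖ a

/-- A partial order is a geometric lattice: it is bounded below, every pair has a least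
upper bound and greatest lower bound, it is atomistic, and it is (upper) semimodular. -/
def IsGeomLatOrder (P : Type*) [PartialOrder P] : Prop :=
  (∃ b : P, ∀ x : P, b ≤ x) ∧
  (∀ x y : P, ∃ u : P, IsLUB {x, y} u) ∧
  (∀ x y : P, ∃ l : P, IsGLB {x, y} l) ∧
  (∀ x : P, IsLUB {a : P | OrdAtom a ∧ a ≤ x} x) ∧
  (∀ x y m j : P, IsGLB {x, y} m → IsLUB {x, y} j → m ⋖ x → y ⋖ j)

/-- A geometric poset: a finite bounded-below poset with rank function `rk`
satisfying (G1) and (G2). -/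
def IsGeometricPoset (P : Type*) [PartialOrder P] [OrderBot P] [Fintype P]
    (rk : P → ℕ) : Prop :=
  rk ⊥ = 0 ∧
  (∀ ⦃x y : P⦄, x ≤ y → rk x ≤ rk y) ∧
  (∀ x y : P, x ⋖ y → rk y = rk x + 1) ∧
  (∀ m : P, IsMax m → IsGeomLatOrder (Set.Iic m)) ∧
  (∀ (x : P) (A : Set P), (∀ a ∈ A, IsAtom a) →
    ∀ y ∈ mubSet A, rk x < rk y → rk y = Nat.card A →
      ∃ a ∈ A, ¬ a ≤ x ∧ ∃ w : P, x ≤ w ∧ a ≤ w)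

/-! The flats of `S` are ranked by `ρ` because a minimal upper bound of a flat `x` and an atom
`p ≰ x` has rank `ρ x + 1` (by (M3) with the meet `⊥`), and (M5) supplies such atoms below any
flat of larger rank. Below a flat `m` the Boolean structure of `S_{≤ m}` provides joins and
meets; closing a join gives the join of flats, meets of flats are flats, and semimodularity is
(M3) applied to this join and meet. For (G2), pick an atom of `S` in each rank-one flat of `A`:
their join in the Boolean interval below `y` has closure `y`, so (M5) produces an atom `q` below
it, outside `x` and joinable with `x`, and `q` must be one of the chosen atoms. -/

section Order

variable {P : Type*} [PartialOrder P]

lemma isLUB_pair_iff {x y u : P} :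
    IsLUB {x, y} u ↔ x ≤ u ∧ y ≤ u ∧ ∀ z, x ≤ z → y ≤ z → u ≤ z := by
  simp [IsLUB, IsLeast, upperBounds, lowerBounds, and_assoc]

lemma isGLB_pair_iff {x y l : P} :
    IsGLB {x, y} l ↔ l ≤ x ∧ l ≤ y ∧ ∀ z, z ≤ x → z ≤ y → z ≤ l := by
  simp [IsGLB, IsGreatest, upperBounds, lowerBounds, and_assoc]

lemma IsGLB.mem_mlb {x y l : P} (hl : IsGLB {x, y} l) : l ∈ mlb x y := by
  obtain ⟨hlx, hly, hglb⟩ := isGLB_pair_iff.mp hl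
  exact ⟨hlx, hly, fun z hzx hzy hlz => le_antisymm (hglb z hzx hzy) hlz⟩

lemma exists_mem_mlb_ge [Finite P] {x y l : P} (hlx : l ≤ x) (hly : l ≤ y) :
    ∃ l' ∈ mlb x y, l ≤ l' := by
  obtain ⟨l', hll', hmax⟩ := Finite.exists_le_maximal (p := fun z => z ≤ x ∧ z ≤ y) ⟨hlx, hly⟩
  exact ⟨l', ⟨hmax.1.1, hmax.1.2, fun z hzx hzy hlz => (hmax.eq_of_le ⟨hzx, hzy⟩ hlz).symm⟩, hll'⟩

lemma covBy_of_lt_of_le_succ {f : P → ℕ} (hf : StrictMono f) {x y : P} (hxy : x < y)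
    (hfy : f y ≤ f x + 1) : x ⋖ y :=
  ⟨hxy, fun z hxz hzy => by have := hf hxz; have := hf hzy; omega⟩

lemma ordAtom_iff_covBy {b a : P} (hb : ∀ z, b ≤ z) : OrdAtom a ↔ b ⋖ a :=
  ⟨fun ⟨b', hb', hcov⟩ => le_antisymm (hb b') (hb' b) ▸ hcov, fun hcov => ⟨b, hb, hcov⟩⟩

lemma ordAtom_of_apply_eq_one {f : P → ℕ} (hf : StrictMono f) {b a : P} (hb : ∀ z, b ≤ z)
    (hfb : f b = 0) (hfa : f a = 1) : OrdAtom a :=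
  (ordAtom_iff_covBy hb).mpr <| covBy_of_lt_of_le_succ hf
    (lt_of_le_of_ne (hb a) fun hba => by rw [hba] at hfb; omega) (by omega)

lemma Set.Iic.coe_covBy_coe {m : P} {a b : Set.Iic m} : (a : P) ⋖ b ↔ a ⋖ b :=
  Set.OrdConnected.apply_covBy_apply_iff (OrderEmbedding.subtype (· ≤ m)) <| by
    rw [OrderEmbedding.coe_subtype, Subtype.range_coe_subtype]
    exact Set.ordConnected_Iic

end Order

section Simplicial

variable {S : Type*} [PartialOrder S] [OrderBot S]

lemma natRank_bot : natRank (⊥ : S) = 0 :=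
  have : IsEmpty {a : S // IsAtom a ∧ a ≤ ⊥} := ⟨fun a => a.2.1.1 (le_bot_iff.mp a.2.2)⟩
  Nat.card_of_isEmpty

lemma natRank_of_isAtom {p : S} (hp : IsAtom p) : natRank p = 1 :=
  have : Subsingleton {a : S // IsAtom a ∧ a ≤ p} := ⟨fun a b => Subtype.ext <|
    ((hp.le_iff_eq a.2.1.1).mp a.2.2).trans ((hp.le_iff_eq b.2.1.1).mp b.2.2).symm⟩
  Nat.card_of_subsingleton ⟨p, hp, le_rfl⟩

lemma bot_mem_mlb_of_isAtom {x p : S} (hp : IsAtom p) (hpx : ¬ p ≤ x) : ⊥ ∈ mlb x p :=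
  ⟨bot_le, bot_le, fun z hzx hzp _ =>
    (hp.le_iff.mp hzp).resolve_right (by rintro rfl; exact hpx hzx)⟩

namespace IsSimplicialPoset

variable [Fintype S]

lemma exists_sup_le (hS : IsSimplicialPoset S) {w : S} (T : Set S) (hT : ∀ t ∈ T, t ≤ w) :
    ∃ j ≤ w, (∀ t ∈ T, t ≤ j) ∧ (∀ z ≤ w, (∀ t ∈ T, t ≤ z) → j ≤ z) ∧
      ∀ q, IsAtom q → q ≤ j → ∃ t ∈ T, q ≤ t := by
  obtain ⟨e⟩ := hS w
  let U := ⋃ t : T, e ⟨t, hT t t.2⟩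
  refine ⟨e.symm U, (e.symm U).2, fun t ht => ?_, fun z hzw hz => ?_, fun q hq hqj => ?_⟩
  · exact e.le_symm_apply.mpr (Set.subset_iUnion (fun t : T => e ⟨t, hT t t.2⟩) ⟨t, ht⟩)
  · refine (e.symm_apply_le (x := ⟨z, hzw⟩) (y := U)).mpr (Set.iUnion_subset fun t => e.monotone ?_)
    exact hz t t.2
  · have hqw := hqj.trans (e.symm U).2
    obtain ⟨x, hx⟩ := Set.isAtom_iff.mp ((e.isAtom_iff _).mpr (hq.Iic hqw))
    have hqU : e ⟨q, hqw⟩ ⊆ U := e.le_symm_apply.mp hqj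
    obtain ⟨⟨t, ht⟩, hxt⟩ := Set.mem_iUnion.mp (hqU (by rw [hx]; rfl))
    refine ⟨t, ht, e.le_iff_le.mp (show e ⟨q, hqw⟩ ≤ e ⟨t, hT t ht⟩ from ?_)⟩
    rw [hx]
    exact Set.singleton_subset_iff.mpr hxt

lemma exists_mem_mub_le (hS : IsSimplicialPoset S) {x y w : S} (hxw : x ≤ w) (hyw : y ≤ w) :
    ∃ j ∈ mub x y, j ≤ w ∧ ∀ z ≤ w, x ≤ z → y ≤ z → j ≤ z := by
  obtain ⟨j, hjw, hub, hleast, -⟩ := hS.exists_sup_le (w := w) {x, y} (by simp [hxw, hyw])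
  have hxj := hub x (by simp)
  have hyj := hub y (by simp)
  refine ⟨j, ⟨hxj, hyj, fun v hxv hyv hvj => ?_⟩, hjw, fun z hzw hxz hyz => ?_⟩
  · exact le_antisymm hvj (hleast v (hvj.trans hjw) (by simp [hxv, hyv]))
  · exact hleast z hzw (by simp [hxz, hyz])

lemma exists_isGLB (hS : IsSimplicialPoset S) {x y w : S} (hxw : x ≤ w) (hyw : y ≤ w) :
    ∃ l, IsGLB {x, y} l := by
  obtain ⟨e⟩ := hS w
  refine ⟨e.symm (e ⟨x, hxw⟩ ∩ e ⟨y, hyw⟩), isGLB_pair_iff.mpr ⟨?_, ?_, fun z hzx hzy => ?_⟩⟩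
  · exact e.symm_apply_le.mpr Set.inter_subset_left
  · exact e.symm_apply_le.mpr Set.inter_subset_right
  · have hzw := hzx.trans hxw
    exact e.le_symm_apply.mpr (Set.subset_inter
      (e.monotone (show (⟨z, hzw⟩ : Set.Iic w) ≤ ⟨x, hxw⟩ from hzx))
      (e.monotone (show (⟨z, hzw⟩ : Set.Iic w) ≤ ⟨y, hyw⟩ from hzy)))

end IsSimplicialPoset

end Simplicial

section Closure

variable {S : Type*} [PartialOrder S] {ρ : S → ℕ} {cl : S → S}

abbrev Flat (cl : S → S) : Type _ := {x : S // cl x = x}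

lemma IsClosureFun.cl_idem (hcl : IsClosureFun ρ cl) (x : S) : cl (cl x) = cl x :=
  le_antisymm
    ((hcl x).2.2 _ ((hcl x).1.trans (hcl (cl x)).1) (by rw [(hcl (cl x)).2.1, (hcl x).2.1]))
    (hcl (cl x)).1

def IsClosureFun.flat (hcl : IsClosureFun ρ cl) (x : S) : Flat cl := ⟨cl x, hcl.cl_idem x⟩

end Closure

section MatroidScheme

variable {S : Type*} [PartialOrder S] [OrderBot S] [Fintype S] {ρ : S → ℕ} {cl : S → S}

lemma IsMatroidScheme.rho_bot (h : IsMatroidScheme ρ) : ρ ⊥ = 0 :=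
  Nat.le_zero.mp (natRank_bot (S := S) ▸ h.M1 ⊥)

lemma IsMatroidScheme.rho_le_one_of_isAtom (h : IsMatroidScheme ρ) {p : S} (hp : IsAtom p) :
    ρ p ≤ 1 :=
  natRank_of_isAtom hp ▸ h.M1 p

namespace IsClosureFun

/-- A maximal common lower bound `l ≥ x` of `cl x` and `z` has `ρ l = ρ x`, so by (M4) they
have a minimal upper bound `u`, and (M3) forces `ρ u = ρ z`. -/
lemma monotone (hcl : IsClosureFun ρ cl) (h : IsMatroidScheme ρ) : Monotone cl := by
  intro x z hxz
  obtain ⟨l, hl, hxl⟩ := exists_mem_mlb_ge (hcl x).1 hxz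
  have hrl : ρ l = ρ x := le_antisymm ((hcl x).2.1 ▸ h.M2 hl.1) (h.M2 hxl)
  obtain ⟨u, hu⟩ := h.M4 (cl x) z l hl (by rw [hrl, (hcl x).2.1])
  have hsub := h.M3 (cl x) z u l hu hl
  have hzu := h.M2 hu.2.1
  rw [(hcl x).2.1, hrl] at hsub
  exact hu.1.trans ((hcl z).2.2 u hu.2.1 (by omega))

lemma cl_le_of_le (hcl : IsClosureFun ρ cl) (h : IsMatroidScheme ρ) {x z : S} (hz : cl z = z)
    (hxz : x ≤ z) : cl x ≤ z :=
  hz ▸ hcl.monotone h hxz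

lemma rho_lt_of_lt (hcl : IsClosureFun ρ cl) (h : IsMatroidScheme ρ) {x y : S} (hx : cl x = x)
    (hxy : x < y) : ρ x < ρ y :=
  lt_of_le_of_ne (h.M2 hxy.le) fun he => hxy.not_ge (hx ▸ (hcl x).2.2 y hxy.le he.symm)

lemma rho_strictMono (hcl : IsClosureFun ρ cl) (h : IsMatroidScheme ρ) :
    StrictMono fun x : Flat cl => ρ x.1 :=
  fun x _ hxy => hcl.rho_lt_of_lt h x.2 hxy

lemma rho_cl_bot (hcl : IsClosureFun ρ cl) (h : IsMatroidScheme ρ) : ρ (cl ⊥) = 0 :=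
  (hcl ⊥).2.1.trans h.rho_bot

lemma flat_bot_le (hcl : IsClosureFun ρ cl) (h : IsMatroidScheme ρ) (x : Flat cl) :
    hcl.flat ⊥ ≤ x :=
  hcl.cl_le_of_le h x.2 bot_le

lemma rho_eq_one_of_isAtom (hcl : IsClosureFun ρ cl) (h : IsMatroidScheme ρ) {p : S}
    (hp : IsAtom p) (hpb : ¬ p ≤ cl ⊥) : ρ p = 1 := by
  have := h.rho_le_one_of_isAtom hp
  have : ρ p ≠ 0 := fun h0 => hpb ((hcl ⊥).2.2 p bot_le (by rw [h0, h.rho_bot]))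
  omega

lemma rho_eq_succ_of_mem_mub (hcl : IsClosureFun ρ cl) (h : IsMatroidScheme ρ) {x p u : S}
    (hx : cl x = x) (hp : IsAtom p) (hpx : ¬ p ≤ x) (hu : u ∈ mub x p) : ρ u = ρ x + 1 := by
  have hsub := h.M3 x p u ⊥ hu (bot_mem_mlb_of_isAtom hp hpx)
  have := h.rho_le_one_of_isAtom hp
  have := hcl.rho_lt_of_lt h hx (lt_of_le_of_ne hu.1 (by rintro rfl; exact hpx hu.2.1))
  rw [h.rho_bot] at hsub
  omega

lemma rho_eq_succ_of_covBy (hcl : IsClosureFun ρ cl) (h : IsMatroidScheme ρ) {x y : Flat cl}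
    (hxy : x ⋖ y) : ρ y.1 = ρ x.1 + 1 := by
  obtain ⟨p, hp, hpy, hpx, -⟩ := h.M5 x.1 y.1 (hcl.rho_strictMono h hxy.lt)
  obtain ⟨u, hu, huy, -⟩ := h.simplicial.exists_mem_mub_le hxy.le hpy
  have hxu : x < hcl.flat u := lt_of_le_of_ne (hu.1.trans (hcl u).1)
    fun he => hpx (he ▸ hu.2.1.trans (hcl u).1)
  have hy : hcl.flat u = y :=
    (eq_or_lt_of_le (show hcl.flat u ≤ y from hcl.cl_le_of_le h y.2 huy)).resolve_right (hxy.2 hxu)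
  rw [← hy, flat, (hcl u).2.1, hcl.rho_eq_succ_of_mem_mub h x.2 hp hpx hu]

lemma ordAtom_iff (hcl : IsClosureFun ρ cl) (h : IsMatroidScheme ρ) {a : Flat cl} :
    OrdAtom a ↔ ρ a.1 = 1 := by
  refine ⟨fun ha => ?_, ordAtom_of_apply_eq_one (hcl.rho_strictMono h) (hcl.flat_bot_le h)
    (hcl.rho_cl_bot h)⟩
  have := hcl.rho_eq_succ_of_covBy h ((ordAtom_iff_covBy (hcl.flat_bot_le h)).mp ha)
  rwa [flat, hcl.rho_cl_bot h] at this

lemma exists_isAtom_cl_eq (hcl : IsClosureFun ρ cl) (h : IsMatroidScheme ρ) {a : S}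
    (ha : cl a = a) (hra : ρ a = 1) : ∃ p, IsAtom p ∧ cl p = a := by
  obtain ⟨p, hp, hpa, hpb, -⟩ := h.M5 (cl ⊥) a (by rw [hcl.rho_cl_bot h, hra]; omega)
  have hrp := hcl.rho_eq_one_of_isAtom h hp hpb
  exact ⟨p, hp, le_antisymm (hcl.cl_le_of_le h ha hpa) ((hcl p).2.2 a hpa (by rw [hra, hrp]))⟩

end IsClosureFun

end MatroidScheme

section Flats

variable {S : Type*} [PartialOrder S] [OrderBot S] [Fintype S] {ρ : S → ℕ} {cl : S → S}

namespace IsClosureFun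

lemma rho_strictMono_Iic (hcl : IsClosureFun ρ cl) (h : IsMatroidScheme ρ) (m : Flat cl) :
    StrictMono fun z : Set.Iic m => ρ z.1.1 :=
  (hcl.rho_strictMono h).comp (Subtype.strictMono_coe _)

lemma exists_isLUB_Iic (hcl : IsClosureFun ρ cl) (h : IsMatroidScheme ρ) {m : Flat cl}
    (x y : Set.Iic m) :
    ∃ j₀ ∈ mub x.1.1 y.1.1, ∃ j : Set.Iic m, j.1.1 = cl j₀ ∧ IsLUB {x, y} j := by
  obtain ⟨j₀, hj₀, hj₀m, hleast⟩ := h.simplicial.exists_mem_mub_le (show x.1.1 ≤ m.1 from x.2) y.2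
  refine ⟨j₀, hj₀, ⟨hcl.flat j₀, hcl.cl_le_of_le h m.2 hj₀m⟩, rfl,
    isLUB_pair_iff.mpr ⟨?_, ?_, fun z hxz hyz => ?_⟩⟩
  · exact hj₀.1.trans (hcl j₀).1
  · exact hj₀.2.1.trans (hcl j₀).1
  · exact hcl.cl_le_of_le h z.1.2 (hleast z.1.1 z.2 hxz hyz)

lemma exists_isGLB_Iic (hcl : IsClosureFun ρ cl) (h : IsMatroidScheme ρ) {m : Flat cl}
    (x y : Set.Iic m) : ∃ l : Set.Iic m, IsGLB {x.1.1, y.1.1} l.1.1 ∧ IsGLB {x, y} l := by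
  obtain ⟨l, hl⟩ := h.simplicial.exists_isGLB (show x.1.1 ≤ m.1 from x.2) y.2
  obtain ⟨hlx, hly, hglb⟩ := isGLB_pair_iff.mp hl
  have hfl : cl l = l := le_antisymm
    (hglb _ (hcl.cl_le_of_le h x.1.2 hlx) (hcl.cl_le_of_le h y.1.2 hly)) (hcl l).1
  exact ⟨⟨⟨l, hfl⟩, hlx.trans x.2⟩, hl,
    isGLB_pair_iff.mpr ⟨hlx, hly, fun z hzx hzy => hglb z.1.1 hzx hzy⟩⟩

lemma covBy_of_isGLB_of_isLUB_Iic (hcl : IsClosureFun ρ cl) (h : IsMatroidScheme ρ)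
    {m : Flat cl} {x y l j : Set.Iic m} (hl : IsGLB {x, y} l) (hj : IsLUB {x, y} j)
    (hlx : l ⋖ x) : y ⋖ j := by
  obtain ⟨j₀, hj₀, j', hj'j₀, hj'⟩ := hcl.exists_isLUB_Iic h x y
  obtain ⟨l', hl'S, hl'⟩ := hcl.exists_isGLB_Iic h x y
  obtain rfl := hj.unique hj'
  obtain rfl := hl.unique hl'
  have hrx := hcl.rho_eq_succ_of_covBy h (Set.Iic.coe_covBy_coe.mpr hlx)
  have hsub := h.M3 _ _ j₀ _ hj₀ hl'S.mem_mlb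
  obtain ⟨hxj, hyj, -⟩ := isLUB_pair_iff.mp hj
  have hyj : y < j := lt_of_le_of_ne hyj fun hy =>
    hlx.lt.not_ge ((isGLB_pair_iff.mp hl).2.2 x le_rfl (hy ▸ hxj))
  refine covBy_of_lt_of_le_succ (hcl.rho_strictMono_Iic h m) hyj ?_
  simp only [hj'j₀, (hcl j₀).2.1]
  omega

/-- If `x ≰ z`, (M5) gives an atom `p ≤ x` outside the meet `x ∧ z`; its closure is an atom of
the interval below `x` that is not below `z`. -/
lemma isLUB_ordAtom_le_Iic (hcl : IsClosureFun ρ cl) (h : IsMatroidScheme ρ) {m : Flat cl}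
    (x : Set.Iic m) : IsLUB {a | OrdAtom a ∧ a ≤ x} x := by
  refine ⟨fun a ha => ha.2, fun z hz => ?_⟩
  by_contra hxz
  obtain ⟨l, hlS, -⟩ := hcl.exists_isGLB_Iic h x z
  obtain ⟨hlx, hlz, hglb⟩ := isGLB_pair_iff.mp hlS
  have hlx' : l.1.1 < x.1.1 := lt_of_le_of_ne hlx fun he => hxz (show x.1.1 ≤ z.1.1 from he ▸ hlz)
  obtain ⟨p, hp, hpx, hpl, -⟩ := h.M5 _ _ (hcl.rho_lt_of_lt h l.1.2 hlx')
  have hrp := hcl.rho_eq_one_of_isAtom h hp fun hpb => hpl (hpb.trans (hcl.flat_bot_le h l.1))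
  have hpx' : cl p ≤ x.1.1 := hcl.cl_le_of_le h x.1.2 hpx
  have ha : OrdAtom (⟨hcl.flat p, hpx'.trans x.2⟩ : Set.Iic m) :=
    ordAtom_of_apply_eq_one (hcl.rho_strictMono_Iic h m) (b := ⟨hcl.flat ⊥, hcl.flat_bot_le h m⟩)
      (fun z => hcl.flat_bot_le h z.1) (hcl.rho_cl_bot h) ((hcl p).2.1.trans hrp)
  exact hpl (hglb p hpx ((hcl p).1.trans (hz ⟨ha, hpx'⟩)))

lemma isGeomLatOrder_Iic (hcl : IsClosureFun ρ cl) (h : IsMatroidScheme ρ) (m : Flat cl) :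
    IsGeomLatOrder (Set.Iic m) := by
  refine ⟨⟨⟨hcl.flat ⊥, hcl.flat_bot_le h m⟩, fun z => hcl.flat_bot_le h z.1⟩,
    fun x y => ?_, fun x y => ?_, hcl.isLUB_ordAtom_le_Iic h,
    fun x y l j hl hj hlx => hcl.covBy_of_isGLB_of_isLUB_Iic h hl hj hlx⟩
  · obtain ⟨-, -, j, -, hj⟩ := hcl.exists_isLUB_Iic h x y
    exact ⟨j, hj⟩
  · obtain ⟨l, -, hl⟩ := hcl.exists_isGLB_Iic h x y
    exact ⟨l, hl⟩

lemma exists_exchange (hcl : IsClosureFun ρ cl) (h : IsMatroidScheme ρ) (x : Flat cl)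
    {A : Set (Flat cl)} (hA : ∀ a ∈ A, OrdAtom a) {y : Flat cl} (hy : y ∈ mubSet A)
    (hxy : ρ x.1 < ρ y.1) : ∃ a ∈ A, ¬ a ≤ x ∧ ∃ w : Flat cl, x ≤ w ∧ a ≤ w := by
  choose p hp hpa using fun a : A =>
    hcl.exists_isAtom_cl_eq h a.1.2 ((hcl.ordAtom_iff h).mp (hA a.1 a.2))
  have hpy : ∀ a : A, p a ≤ y.1 := fun a => ((hcl (p a)).1.trans (hpa a).le).trans (hy.1 a.1 a.2)
  obtain ⟨j, hjy, hpj, -, hatoms⟩ :=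
    h.simplicial.exists_sup_le (Set.range p) (Set.forall_mem_range.mpr hpy)
  have hclj : hcl.flat j = y := hy.2 _
    (fun a ha => (hpa ⟨a, ha⟩).symm.le.trans (hcl.monotone h (hpj _ ⟨⟨a, ha⟩, rfl⟩)))
    (hcl.cl_le_of_le h y.2 hjy)
  have hrj : ρ x.1 < ρ j := by
    rw [← hclj, flat, (hcl j).2.1] at hxy
    exact hxy
  obtain ⟨q, hq, hqj, hqx, u, hu⟩ := h.M5 x.1 j hrj
  obtain ⟨-, ⟨a, rfl⟩, hqa⟩ := hatoms q hq hqj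
  obtain rfl : q = p a := ((hp a).le_iff_eq hq.1).mp hqa
  exact ⟨a.1, a.2, fun hax => hqx (((hcl _).1.trans (hpa a).le).trans hax), hcl.flat u,
    hu.1.trans (hcl u).1, (hpa a).symm.le.trans (hcl.monotone h hu.2.1)⟩

end IsClosureFun

end Flats

/-- Theorem 9.5 (first half): the poset of flats of a matroid scheme, with the rank
function inherited from `ρ`, is a geometric poset: it is bounded below and ranked,
every maximal interval is a geometric lattice (G1), and the exchange condition (G2)
holds for minimal upper bounds of sets of atoms of the poset of flats. -/
theorem statement15 {S : Type*} [PartialOrder S] [OrderBot S] [Fintype S]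
    (ρ : S → ℕ) (h : IsMatroidScheme ρ) (cl : S → S) (hcl : IsClosureFun ρ cl) :
    (∃ b : {x : S // cl x = x}, ∀ z : {x : S // cl x = x}, b ≤ z) ∧
    (∀ x y : {x : S // cl x = x}, x ≤ y → ρ x.val ≤ ρ y.val) ∧
    (∀ x y : {x : S // cl x = x}, x ⋖ y → ρ y.val = ρ x.val + 1) ∧
    (∀ m : {x : S // cl x = x}, IsMax m → IsGeomLatOrder (Set.Iic m)) ∧
    (∀ (x : {x : S // cl x = x}) (A : Set {x : S // cl x = x}),
      (∀ a ∈ A, OrdAtom a) →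
      ∀ y ∈ mubSet A, ρ x.val < ρ y.val → ρ y.val = Nat.card A →
        ∃ a ∈ A, ¬ a ≤ x ∧ ∃ w : {x : S // cl x = x}, x ≤ w ∧ a ≤ w) :=
  ⟨⟨hcl.flat ⊥, hcl.flat_bot_le h⟩,
    fun _ _ hxy => h.M2 hxy,
    fun _ _ hxy => hcl.rho_eq_succ_of_covBy h hxy,
    fun m _ => hcl.isGeomLatOrder_Iic h m,
    fun x _ hA _ hy hxy _ => hcl.exists_exchange h x hA hy hxy⟩
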